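/- arXiv:1602.02166 — 4 statements merged into one kernel-verified Lean document; each statement's English description precedes it below -/
import Mathlib

section
/- For every positive integer M, the number of orbits of fermionic binary words of length M under the rotation action of the cyclic group Z/M equals (1/(2M)) · Σ_{n | M, n odd} φ(n) · 2^{M/n}, where the sum runs over the odd divisors n of M. -/
/-- Rotation of a binary word of length `M` by `k`: `(c_k · x)(i) = x (i + k)`. -/
def rot (M : ℕ) (k : ZMod M) (x : ZMod M → ZMod 2) : ZMod M → ZMod 2 :=
  fun i => x (i + k)

/-- The orbit of a binary word under the rotation action of the cyclic group `ZMod M`. -/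
def rotOrbit (M : ℕ) (x : ZMod M → ZMod 2) : Set (ZMod M → ZMod 2) :=
  {y | ∃ k : ZMod M, y = rot M k x}

/-- A binary word is fermionic if it contains an odd number of ones. -/
def Fermionic (M : ℕ) [NeZero M] (x : ZMod M → ZMod 2) : Prop :=
  Odd (Finset.univ.filter (fun i : ZMod M => x i = 1)).card

/-!
Burnside's lemma for the rotation action on fermionic words. A word fixed by the rotation `c_k` is
`k`-periodic, i.e. pulled back from a word on `ZMod M ⧸ ⟨k⟩`, which has `M / n` letters where `n`
is the order of `k`. Its number of ones is `n` times that of the quotient word, so it is fermionic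
only when `n` is odd, and then exactly when the quotient word is: half of all `2 ^ (M / n)` words.
There are `φ n` rotations of order `n`, which gives the sum over odd divisors.
-/

open Finset Function

namespace ZMod

theorem natCast_card_filter_eq_one {ι : Type*} [Fintype ι] (x : ι → ZMod 2) :
    ((#{i | x i = 1} : ℕ) : ZMod 2) = ∑ i, x i := by
  have hx : ∀ i, x i = if x i = 1 then 1 else 0 := fun i => by
    generalize x i = a
    revert a
    decide
  rw [sum_congr rfl fun i _ => hx i, sum_boole]

theorem two_mul_card_sum_eq_one {ι : Type*} [Fintype ι] [Nonempty ι] :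
    2 * Nat.card {y : ι → ZMod 2 // ∑ i, y i = 1} = 2 ^ Fintype.card ι := by
  classical
  let s : (ι → ZMod 2) →+ ZMod 2 := ∑ i, Pi.evalAddMonoidHom (fun _ => ZMod 2) i
  have hs : ∀ y, s y = ∑ i, y i := fun y => by simp [s]
  have hsurj : Surjective s := fun b => ⟨Pi.single (Classical.arbitrary ι) b, by simp [hs]⟩
  have hfiber : ∀ b, #{y | s y = b} = #{y | s y = 1} := fun b =>
    AddMonoidHom.card_fiber_eq_of_mem_range s (hsurj b) (hsurj 1)
  calc 2 * Nat.card {y : ι → ZMod 2 // ∑ i, y i = 1}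
      = ∑ b : ZMod 2, #{y | s y = b} := by
        simp only [hfiber, sum_const, card_univ, ZMod.card, smul_eq_mul, Nat.card_eq_fintype_card,
          Fintype.card_subtype, ← hs]
    _ = 2 ^ Fintype.card ι := by
        rw [← card_eq_sum_card_fiberwise fun y _ => mem_univ (s y)]
        simp

theorem two_mul_card_natCast_mul_sum_eq_one {ι : Type*} [Fintype ι] [Nonempty ι] (n : ℕ) :
    2 * Nat.card {y : ι → ZMod 2 // (n : ZMod 2) * ∑ i, y i = 1} =
      if Odd n then 2 ^ Fintype.card ι else 0 := by
  split_ifs with hn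
  · simpa [natCast_eq_one_iff_odd.2 hn] using two_mul_card_sum_eq_one (ι := ι)
  · simp [natCast_eq_zero_iff_even.2 (Nat.not_odd_iff_even.1 hn)]

end ZMod

theorem QuotientAddGroup.sum_comp_mk {G M : Type*} [AddGroup G] [Fintype G] [AddCommMonoid M]
    (H : AddSubgroup G) [Fintype (G ⧸ H)] (y : G ⧸ H → M) :
    ∑ g : G, y g = Nat.card H • ∑ q, y q := by
  classical
  rw [← sum_fiberwise univ (fun g : G => (g : G ⧸ H)) (fun g => y g), smul_sum]
  refine sum_congr rfl fun q _ => ?_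
  have hcard : #{g : G | (g : G ⧸ H) = q} = Nat.card H := by
    have := Nat.card_congr (preimageMkEquivAddSubgroupProdSet H {q})
    simp only [Nat.card_prod, Nat.card_unique, mul_one] at this
    rw [← this, Nat.card_eq_fintype_card, Fintype.card_subtype]
    simp
  rw [sum_congr rfl fun g hg => by rw [(mem_filter.1 hg).2], sum_const, hcard]

theorem AddSubgroup.natCard_quotient_zmultiples {G : Type*} [AddGroup G] [Finite G] (k : G) :
    Nat.card (G ⧸ zmultiples k) = Nat.card G / addOrderOf k :=
  Nat.eq_div_of_mul_eq_left (addOrderOf_pos k).ne' <| by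
    rw [← Nat.card_zmultiples, ← card_eq_card_quotient_mul_card_addSubgroup]

namespace Function

variable {G : Type*} [AddGroup G]

def periodicEquiv {α : Type*} (k : G) :
    {x : G → α // Periodic x k} ≃ (G ⧸ AddSubgroup.zmultiples k → α) where
  toFun x := x.2.lift
  invFun y := ⟨fun g => y g, fun g =>
    congrArg y (QuotientAddGroup.mk_add_of_mem g (AddSubgroup.mem_zmultiples k) :)⟩
  left_inv x := Subtype.ext <| funext x.2.lift_coe
  right_inv _ := funext fun q => QuotientAddGroup.induction_on q fun g => Periodic.lift_coe _ g

theorem two_mul_card_periodic_sum_eq_one [Fintype G] (k : G) :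
    2 * Nat.card {x : G → ZMod 2 // Periodic x k ∧ ∑ i, x i = 1} =
      if Odd (addOrderOf k) then 2 ^ (Nat.card G / addOrderOf k) else 0 := by
  classical
  have hsum (x : {x : G → ZMod 2 // Periodic x k}) :
      ∑ i, x.1 i = (addOrderOf k : ZMod 2) * ∑ q, periodicEquiv k x q := by
    conv_lhs => rw [← (periodicEquiv k).left_inv x]
    rw [← nsmul_eq_mul, ← Nat.card_zmultiples]
    exact QuotientAddGroup.sum_comp_mk (AddSubgroup.zmultiples k) (periodicEquiv k x)
  let e : {x : G → ZMod 2 // Periodic x k ∧ ∑ i, x i = 1} ≃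
      {y : G ⧸ AddSubgroup.zmultiples k → ZMod 2 // (addOrderOf k : ZMod 2) * ∑ q, y q = 1} :=
    (Equiv.subtypeSubtypeEquivSubtypeInter _ _).symm.trans
      ((periodicEquiv k).subtypeEquiv fun x => by rw [hsum x])
  rw [Nat.card_congr e, ZMod.two_mul_card_natCast_mul_sum_eq_one, ← Nat.card_eq_fintype_card,
    AddSubgroup.natCard_quotient_zmultiples]

end Function

theorem IsAddCyclic.sum_addOrderOf {G β : Type*} [AddGroup G] [Fintype G] [IsAddCyclic G]
    [AddCommMonoid β] (f : ℕ → β) :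
    ∑ g : G, f (addOrderOf g) = ∑ n ∈ (Fintype.card G).divisors, n.totient • f n := by
  classical
  rw [← sum_fiberwise_of_maps_to fun g _ =>
    Nat.mem_divisors.2 ⟨addOrderOf_dvd_card (x := g), Fintype.card_ne_zero⟩]
  refine sum_congr rfl fun n hn => ?_
  rw [sum_congr rfl fun g hg => by rw [(mem_filter.1 hg).2], sum_const,
    IsAddCyclic.card_addOrderOf_eq_totient (Nat.dvd_of_mem_divisors hn)]

theorem AddAction.sum_natCard_fixedBy (G α : Type*) [AddGroup G] [Fintype G] [AddAction G α]
    [Finite α] :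
    ∑ g : G, Nat.card (fixedBy α g) = Nat.card (orbitRel.Quotient G α) * Fintype.card G := by
  classical
  have := Fintype.ofFinite α
  simpa only [Nat.card_eq_fintype_card] using sum_card_fixedBy_eq_card_orbits_mul_card_addGroup G α

noncomputable def SubAddAction.orbitRelQuotientEquiv {G α : Type*} [AddGroup G] [AddAction G α]
    (p : SubAddAction G α) :
    AddAction.orbitRel.Quotient G p ≃ {S : Set α // ∃ x ∈ p, S = AddAction.orbit G x} :=
  Equiv.ofBijective
    (fun q => ⟨Subtype.val '' q.orbit, q.out, q.out.2, by
      rw [AddAction.orbitRel.Quotient.orbit_eq_orbit_out q Quotient.out_eq', val_image_orbit]⟩)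
    ⟨fun _ _ h => AddAction.orbitRel.Quotient.orbit_injective <|
        Set.image_injective.2 Subtype.val_injective (congrArg Subtype.val h),
      by
        rintro ⟨S, x, hx, rfl⟩
        exact ⟨Quotient.mk'' ⟨x, hx⟩, Subtype.ext <|
          (congrArg (Subtype.val '' ·) (AddAction.orbitRel.Quotient.orbit_mk _)).trans
            (val_image_orbit _)⟩⟩

section Rotation

variable {M : ℕ}

instance rotAddAction : AddAction (ZMod M) (ZMod M → ZMod 2) where
  vadd := rot M
  zero_vadd x := funext fun i => congrArg x (add_zero i)
  add_vadd a b x := funext fun i => congrArg x (add_assoc i a b).symm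

theorem rot_eq_self_iff_periodic (k : ZMod M) (x : ZMod M → ZMod 2) :
    rot M k x = x ↔ Periodic x k :=
  funext_iff

theorem rotOrbit_eq_orbit (x : ZMod M → ZMod 2) : rotOrbit M x = AddAction.orbit (ZMod M) x :=
  Set.ext fun _ => exists_congr fun _ => eq_comm

variable [NeZero M]

theorem fermionic_iff_sum_eq_one (x : ZMod M → ZMod 2) : Fermionic M x ↔ ∑ i, x i = 1 := by
  rw [Fermionic, ← ZMod.natCast_eq_one_iff_odd, ZMod.natCast_card_filter_eq_one]

theorem fermionic_rot_iff (k : ZMod M) (x : ZMod M → ZMod 2) :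
    Fermionic M (rot M k x) ↔ Fermionic M x := by
  rw [fermionic_iff_sum_eq_one, fermionic_iff_sum_eq_one, ← Equiv.sum_comp (Equiv.addRight k) x]
  rfl

variable (M) in
def fermionicWords : SubAddAction (ZMod M) (ZMod M → ZMod 2) where
  carrier := {x | Fermionic M x}
  vadd_mem' k x := (fermionic_rot_iff k x).2

theorem natCard_fixedBy_fermionicWords (k : ZMod M) :
    Nat.card (AddAction.fixedBy (fermionicWords M) k) =
      Nat.card {x : ZMod M → ZMod 2 // Periodic x k ∧ ∑ i, x i = 1} :=
  Nat.card_congr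
    { toFun p := ⟨p.1.1, (rot_eq_self_iff_periodic k _).1 (congrArg Subtype.val p.2),
        (fermionic_iff_sum_eq_one _).1 p.1.2⟩
      invFun x := ⟨⟨x.1, (fermionic_iff_sum_eq_one _).2 x.2.2⟩,
        Subtype.ext ((rot_eq_self_iff_periodic k _).2 x.2.1)⟩
      left_inv _ := rfl
      right_inv _ := rfl }

variable (M) in
theorem two_mul_card_fermionic_orbits_mul :
    2 * (Nat.card {S : Set (ZMod M → ZMod 2) // ∃ x, Fermionic M x ∧ S = rotOrbit M x} * M) =
      ∑ n ∈ M.divisors.filter Odd, n.totient * 2 ^ (M / n) := by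
  have horbits : Nat.card {S : Set (ZMod M → ZMod 2) // ∃ x, Fermionic M x ∧ S = rotOrbit M x} =
      Nat.card (AddAction.orbitRel.Quotient (ZMod M) (fermionicWords M)) := by
    simp only [rotOrbit_eq_orbit]
    exact Nat.card_congr (fermionicWords M).orbitRelQuotientEquiv.symm
  have hburnside := AddAction.sum_natCard_fixedBy (ZMod M) (fermionicWords M)
  rw [ZMod.card] at hburnside
  calc 2 * (Nat.card {S : Set (ZMod M → ZMod 2) // ∃ x, Fermionic M x ∧ S = rotOrbit M x} * M)
      = ∑ k : ZMod M, 2 * Nat.card (AddAction.fixedBy (fermionicWords M) k) := by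
        rw [horbits, ← hburnside, mul_sum]
    _ = ∑ k : ZMod M, if Odd (addOrderOf k) then 2 ^ (M / addOrderOf k) else 0 := by
        simp only [natCard_fixedBy_fermionicWords, two_mul_card_periodic_sum_eq_one,
          Nat.card_zmod]
    _ = ∑ n ∈ M.divisors.filter Odd, n.totient * 2 ^ (M / n) := by
        rw [IsAddCyclic.sum_addOrderOf (fun n => if Odd n then 2 ^ (M / n) else 0), ZMod.card,
          sum_filter]
        simp only [smul_eq_mul, mul_ite, mul_zero]

end Rotation

/-- For every positive integer `M`, the number of orbits of fermionic binary words of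
length `M` under the rotation action of the cyclic group `ZMod M` equals
`(1/(2M)) · Σ_{n | M, n odd} φ(n) · 2^(M/n)`. -/
theorem number_of_fermionic_single_trace_states (M : ℕ) [NeZero M] :
    (Nat.card {S : Set (ZMod M → ZMod 2) // ∃ x, Fermionic M x ∧ S = rotOrbit M x} : ℚ)
      = (1 / (2 * M)) *
        ∑ n ∈ M.divisors.filter (fun n => Odd n),
          (Nat.totient n : ℚ) * 2 ^ (M / n) := by
  have hM : (M : ℚ) ≠ 0 := Nat.cast_ne_zero.2 (NeZero.ne M)
  have hcount := congrArg (Nat.cast : ℕ → ℚ) (two_mul_card_fermionic_orbits_mul M)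
  push_cast at hcount
  rw [← hcount]
  field_simp
end

section
/- For every positive integer M, the number of orbits of bosonic non-vanishing binary words of length M under the rotation action of the cyclic group Z/M equals the number of orbits of fermionic binary words of length M, and both numbers equal (1/(2M)) · Σ_{n | M, n odd} φ(n) · 2^{M/n}. (In the string bit model this says that for every bit number M there are equally many bosonic and fermionic single trace states.) -/
/-- A binary word is bosonic if it contains an even number of ones. -/
def Bosonic (M : ℕ) [NeZero M] (x : ZMod M → ZMod 2) : Prop :=
  Even (Finset.univ.filter (fun i : ZMod M => x i = 1)).card

/-- A binary word `x` of length `M` is vanishing if there is a divisor `d` of `M` with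
`M/d` even such that `x` is `d`-periodic and the block `(x 0, …, x (d-1))` contains an
odd number of ones. -/
def Vanishing (M : ℕ) (x : ZMod M → ZMod 2) : Prop :=
  ∃ d : ℕ, d ∣ M ∧ Even (M / d) ∧ (∀ i : ZMod M, x (i + (d : ZMod M)) = x i) ∧
    Odd ((Finset.range d).filter (fun j : ℕ => x ((j : ZMod M)) = 1)).card

/-!
Burnside's lemma turns each orbit count into `(1/M) · Σ_k #Fix(c_k)`, and `c_k` fixes exactly the
words of period `M / ord k`, i.e. the repetitions of words of that length. The parity of a repeated
word is the parity of its block times the number of repetitions; this counts the fixed fermionic and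
bosonic words explicitly and gives the formula. Vanishing words of length `2h` are exactly the
doubles of words of length `h` that are fermionic or vanishing, and there are none of odd length; by
induction on the length, the fixed-point count of vanishing words is that of bosonic words minus that
of fermionic words, which is the first equality.
-/

open Finset

namespace BinaryWord

variable {n d : ℕ}

theorem card_subtype_or {α : Type*} [Finite α] {p q : α → Prop} (h : ∀ x, p x → ¬ q x) :
    Nat.card {x // p x ∨ q x} = Nat.card {x // p x} + Nat.card {x // q x} := by
  classical
  rw [Nat.card_congr (subtypeOrEquiv p q (Pi.disjoint_iff.mpr fun x => Prop.disjoint_iff.mpr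
    fun hpq => h x hpq.1 hpq.2)), Nat.card_sum]

theorem natCast_card_filter_eq_one {ι : Type*} (s : Finset ι) (f : ι → ZMod 2) :
    (#{i ∈ s | f i = 1} : ZMod 2) = ∑ i ∈ s, f i := by
  rw [Finset.natCast_card_filter]
  exact Finset.sum_congr rfl fun i _ => by generalize f i = a; fin_cases a <;> rfl

theorem odd_nsmul_zmod_two {m : ℕ} (hm : Odd m) (a : ZMod 2) : m • a = a := by
  rw [nsmul_eq_mul, ZMod.natCast_eq_one_iff_odd.mpr hm, one_mul]

theorem even_nsmul_zmod_two {m : ℕ} (hm : Even m) (a : ZMod 2) : m • a = 0 := by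
  rw [nsmul_eq_mul, ZMod.natCast_eq_zero_iff_even.mpr hm, zero_mul]

theorem natCast_gcd_mem_iff (H : AddSubgroup (ZMod n)) (c : ℕ) :
    ((n.gcd c : ℕ) : ZMod n) ∈ H ↔ (c : ZMod n) ∈ H := by
  constructor
  · intro h
    have hc : (c : ZMod n) = (c / n.gcd c) • ((n.gcd c : ℕ) : ZMod n) := by
      rw [nsmul_eq_mul, ← Nat.cast_mul, Nat.div_mul_cancel (Nat.gcd_dvd_right n c)]
    exact hc ▸ H.nsmul_mem h _
  · intro h
    -- Bézout: `gcd n c = n * a + c * b`, and `n = 0` in `ZMod n`.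
    have hg : ((n.gcd c : ℕ) : ZMod n) = Nat.gcdB n c • (c : ZMod n) := by
      have := congrArg (Int.cast : ℤ → ZMod n) (Nat.gcd_eq_gcd_ab n c)
      push_cast [ZMod.natCast_self] at this
      rw [this, zsmul_eq_mul, zero_mul, zero_add, mul_comm]
    exact hg ▸ H.zsmul_mem h _

theorem neZero_of_dvd [NeZero n] (hd : d ∣ n) : NeZero d :=
  ⟨fun h => NeZero.ne n (zero_dvd_iff.mp (h ▸ hd))⟩

theorem dvd_of_even_two_mul_div {d h : ℕ} (hd : d ∣ 2 * h) (he : Even (2 * h / d)) : d ∣ h := by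
  have := (Nat.dvd_div_iff_mul_dvd hd).mp he.two_dvd
  exact (Nat.mul_dvd_mul_iff_left two_pos).mp (by rwa [mul_comm] at this)

theorem div_ne_zero_of_mem_divisors {n m : ℕ} (hm : m ∈ n.divisors) : n / m ≠ 0 :=
  (Nat.div_pos (Nat.divisor_le hm) (Nat.pos_of_mem_divisors hm)).ne'

theorem totient_two_mul (j : ℕ) :
    (2 * j).totient = if Odd j then j.totient else 2 * j.totient := by
  split_ifs with hj
  · rw [Nat.totient_mul (Nat.coprime_two_left.mpr hj), Nat.totient_two, one_mul]
  · exact Nat.totient_mul_of_prime_of_dvd Nat.prime_two (Nat.not_odd_iff_even.mp hj).two_dvd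

theorem sum_divisors_two_mul_filter_even {h : ℕ} (hh : h ≠ 0) (g : ℕ → ℕ) :
    ∑ m ∈ (2 * h).divisors with Even m, g m = ∑ j ∈ h.divisors, g (2 * j) := by
  have hfilter : {m ∈ (2 * h).divisors | Even m} = h.divisors.image (2 * ·) := by
    ext m
    simp only [Finset.mem_filter, Nat.mem_divisors, Finset.mem_image]
    constructor
    · rintro ⟨⟨hm, -⟩, heven⟩
      obtain ⟨j, rfl⟩ := heven.two_dvd
      exact ⟨j, ⟨(Nat.mul_dvd_mul_iff_left two_pos).mp hm, hh⟩, rfl⟩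
    · rintro ⟨j, ⟨hj, -⟩, rfl⟩
      exact ⟨⟨Nat.mul_dvd_mul_left 2 hj, by omega⟩, even_two_mul j⟩
  rw [hfilter, Finset.sum_image fun _ _ _ _ h => by omega]

theorem rot_zero (x : ZMod n → ZMod 2) : rot n 0 x = x :=
  funext fun i => by simp [rot]

theorem rot_rot (k l : ZMod n) (x : ZMod n → ZMod 2) : rot n k (rot n l x) = rot n (k + l) x :=
  funext fun i => by simp [rot, add_assoc]

theorem rot_comm (k l : ZMod n) (x : ZMod n → ZMod 2) :
    rot n k (rot n l x) = rot n l (rot n k x) := by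
  rw [rot_rot, rot_rot, add_comm]

/-- Not an instance: for `n = 2` it would clash with the pointwise action of `ZMod 2` on words. -/
abbrev rotAction (n : ℕ) : AddAction (ZMod n) (ZMod n → ZMod 2) where
  vadd := rot n
  zero_vadd := rot_zero
  add_vadd k l x := (rot_rot k l x).symm

theorem rot_natCast_eq_self_of_dvd {x : ZMod n → ZMod 2} {e : ℕ} (hx : rot n d x = x)
    (hde : d ∣ e) : rot n e x = x := by
  let := rotAction n
  obtain ⟨t, rfl⟩ := hde
  have hcast : ((d * t : ℕ) : ZMod n) = t • (d : ZMod n) := by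
    rw [nsmul_eq_mul, Nat.cast_mul, mul_comm]
  exact hcast ▸ (AddAction.stabilizer (ZMod n) x).nsmul_mem hx t

theorem rotOrbit_eq_orbit (x : ZMod n → ZMod 2) :
    letI := rotAction n
    rotOrbit n x = AddAction.orbit (ZMod n) x := by
  ext y
  exact exists_congr fun k => eq_comm

noncomputable def fixedPointSum (n : ℕ) [NeZero n] (P : (ZMod n → ZMod 2) → Prop) : ℕ :=
  ∑ k : ZMod n, Nat.card {x // P x ∧ rot n k x = x}

theorem card_rotOrbits_mul_eq_fixedPointSum [NeZero n] (P : (ZMod n → ZMod 2) → Prop)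
    (hP : ∀ k x, P x → P (rot n k x)) :
    Nat.card {S : Set (ZMod n → ZMod 2) // ∃ x, P x ∧ S = rotOrbit n x} * n =
      fixedPointSum n P := by
  classical
  let := rotAction n
  let p : SubAddAction (ZMod n) (ZMod n → ZMod 2) := ⟨{x | P x}, fun k x hx => hP k x hx⟩
  let orbitEquiv : AddAction.orbitRel.Quotient (ZMod n) p ≃
      {S : Set (ZMod n → ZMod 2) // ∃ x, P x ∧ S = rotOrbit n x} :=
    Equiv.ofBijective (fun q => ⟨Subtype.val '' q.orbit, q.out, q.out.2, by
        rw [AddAction.orbitRel.Quotient.orbit_eq_orbit_out q Quotient.out_eq',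
          SubAddAction.val_image_orbit, rotOrbit_eq_orbit]⟩)
      ⟨fun q q' h => AddAction.orbitRel.Quotient.orbit_injective
        (Set.image_injective.mpr Subtype.val_injective (congrArg Subtype.val h)),
       fun ⟨S, x, hx, hS⟩ => ⟨⟦⟨x, hx⟩⟧, Subtype.ext <| by
        simp only [hS, AddAction.orbitRel.Quotient.orbit_mk, SubAddAction.val_image_orbit,
          rotOrbit_eq_orbit]⟩⟩
  have fixedEquiv (k : ZMod n) :
      AddAction.fixedBy p k ≃ {x // P x ∧ rot n k x = x} :=
    (Equiv.subtypeEquivRight fun y => Subtype.ext_iff).trans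
      (Equiv.subtypeSubtypeEquivSubtypeInter P (fun x => rot n k x = x))
  calc Nat.card {S : Set (ZMod n → ZMod 2) // ∃ x, P x ∧ S = rotOrbit n x} * n
      = Fintype.card (AddAction.orbitRel.Quotient (ZMod n) p) * Fintype.card (ZMod n) := by
        rw [← Nat.card_congr orbitEquiv, Nat.card_eq_fintype_card, ZMod.card]
    _ = ∑ k : ZMod n, Fintype.card (AddAction.fixedBy p k) :=
        (AddAction.sum_card_fixedBy_eq_card_orbits_mul_card_addGroup _ _).symm
    _ = fixedPointSum n P := Finset.sum_congr rfl fun k _ => by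
        rw [← Nat.card_eq_fintype_card, Nat.card_congr (fixedEquiv k)]

theorem rot_eq_self_iff_addOrderOf [NeZero n] (k : ZMod n) (x : ZMod n → ZMod 2) :
    rot n k x = x ↔ rot n ((n / addOrderOf k : ℕ) : ZMod n) x = x := by
  let := rotAction n
  have hk : n / addOrderOf k = n.gcd k.val := by
    rw [← ZMod.natCast_zmod_val k, ZMod.addOrderOf_coe _ (NeZero.ne n), ZMod.natCast_zmod_val,
      Nat.div_div_self (Nat.gcd_dvd_left _ _) (NeZero.ne n)]
  rw [hk]
  conv_lhs => rw [← ZMod.natCast_zmod_val k]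
  exact (natCast_gcd_mem_iff (AddAction.stabilizer (ZMod n) x) k.val).symm

theorem sum_addOrderOf [NeZero n] (g : ℕ → ℕ) :
    ∑ k : ZMod n, g (addOrderOf k) = ∑ m ∈ n.divisors, m.totient * g m := by
  rw [← Finset.sum_fiberwise_of_maps_to (t := n.divisors) (g := addOrderOf)
    (fun k _ => Nat.mem_divisors.mpr ⟨by simpa using addOrderOf_dvd_card (x := k), NeZero.ne n⟩)]
  refine Finset.sum_congr rfl fun m hm => ?_
  rw [Finset.sum_congr rfl fun k hk => by rw [(Finset.mem_filter.mp hk).2], Finset.sum_const,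
    smul_eq_mul, IsAddCyclic.card_addOrderOf_eq_totient (by simpa using Nat.dvd_of_mem_divisors hm)]

theorem fixedPointSum_eq_sum_divisors [NeZero n] (P : (ZMod n → ZMod 2) → Prop) :
    fixedPointSum n P =
      ∑ m ∈ n.divisors, m.totient * Nat.card {x // P x ∧ rot n ((n / m : ℕ) : ZMod n) x = x} := by
  rw [fixedPointSum, ← sum_addOrderOf]
  refine Finset.sum_congr rfl fun k _ => ?_
  simp only [rot_eq_self_iff_addOrderOf k]

theorem fixedPointSum_congr [NeZero n] {P Q : (ZMod n → ZMod 2) → Prop} (h : ∀ x, P x ↔ Q x) :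
    fixedPointSum n P = fixedPointSum n Q := by
  rw [show P = Q from funext fun x => propext (h x)]

theorem fixedPointSum_or [NeZero n] {P Q : (ZMod n → ZMod 2) → Prop} (h : ∀ x, P x → ¬ Q x) :
    fixedPointSum n (fun x => P x ∨ Q x) = fixedPointSum n P + fixedPointSum n Q := by
  rw [fixedPointSum, fixedPointSum, fixedPointSum, ← Finset.sum_add_distrib]
  refine Finset.sum_congr rfl fun k _ => ?_
  simp only [or_and_right]
  exact card_subtype_or fun x hP hQ => h x hP.1 hQ.1

def parity [NeZero n] (x : ZMod n → ZMod 2) : ZMod 2 := ∑ i, x i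

theorem fermionic_iff [NeZero n] (x : ZMod n → ZMod 2) : Fermionic n x ↔ parity x = 1 := by
  rw [Fermionic, ← ZMod.natCast_eq_one_iff_odd, natCast_card_filter_eq_one, parity]

theorem bosonic_iff [NeZero n] (x : ZMod n → ZMod 2) : Bosonic n x ↔ parity x = 0 := by
  rw [Bosonic, ← ZMod.natCast_eq_zero_iff_even, natCast_card_filter_eq_one, parity]

theorem parity_rot [NeZero n] (k : ZMod n) (x : ZMod n → ZMod 2) :
    parity (rot n k x) = parity x :=
  Fintype.sum_equiv (Equiv.addRight k) _ _ fun _ => rfl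

theorem fermionic_rot_iff [NeZero n] (k : ZMod n) (x : ZMod n → ZMod 2) :
    Fermionic n (rot n k x) ↔ Fermionic n x := by
  rw [fermionic_iff, fermionic_iff, parity_rot]

theorem bosonic_rot_iff [NeZero n] (k : ZMod n) (x : ZMod n → ZMod 2) :
    Bosonic n (rot n k x) ↔ Bosonic n x := by
  rw [bosonic_iff, bosonic_iff, parity_rot]

theorem card_parity_eq [NeZero n] (a : ZMod 2) :
    Nat.card {x : ZMod n → ZMod 2 // parity x = a} = 2 ^ (n - 1) := by
  -- Toggling the first letter exchanges the two parity classes.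
  have toggle : Nat.card {x : ZMod n → ZMod 2 // parity x = 0} =
      Nat.card {x : ZMod n → ZMod 2 // parity x = 1} :=
    Nat.card_congr <| (Equiv.addRight (Pi.single 0 1)).subtypeEquiv fun x => by
      simp only [Equiv.coe_addRight, parity, Pi.add_apply, Finset.sum_add_distrib,
        Finset.sum_pi_single', Finset.mem_univ, if_true, add_eq_right]
  have total : Nat.card {x : ZMod n → ZMod 2 // parity x = 0} +
      Nat.card {x : ZMod n → ZMod 2 // parity x = 1} = 2 ^ n := by
    rw [← card_subtype_or fun x h0 h1 => zero_ne_one (h0.symm.trans h1),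
      Nat.card_congr (Equiv.subtypeUnivEquiv fun x =>
        (show ∀ s : ZMod 2, s = 0 ∨ s = 1 by decide) (parity x)),
      Nat.card_fun, Nat.card_zmod, Nat.card_zmod]
  have hpow : 2 ^ n = 2 ^ (n - 1) + 2 ^ (n - 1) := by
    rw [← two_mul, mul_pow_sub_one (NeZero.ne n)]
  fin_cases a <;> simp only [Fin.zero_eta, Fin.mk_one] <;> omega

theorem sum_range_natCast [NeZero d] {M : Type*} [AddCommMonoid M] (f : ZMod d → M) :
    ∑ j ∈ range d, f j = ∑ j, f j :=
  Finset.sum_nbij' (fun j => (j : ZMod d)) ZMod.val (fun _ _ => Finset.mem_univ _)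
    (fun j _ => Finset.mem_range.mpr (ZMod.val_lt j))
    (fun _ hj => ZMod.val_cast_of_lt (Finset.mem_range.mp hj)) (fun j _ => ZMod.natCast_zmod_val j)
    fun _ _ => rfl

section Lift

variable (hd : d ∣ n)

def lift (b : ZMod d → ZMod 2) : ZMod n → ZMod 2 :=
  b ∘ ZMod.castHom hd (ZMod d)

theorem lift_natCast (b : ZMod d → ZMod 2) (j : ℕ) : lift hd b j = b j :=
  congrArg b (map_natCast _ j)

theorem rot_lift (k : ZMod n) (b : ZMod d → ZMod 2) :
    rot n k (lift hd b) = lift hd (rot d (ZMod.castHom hd (ZMod d) k) b) :=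
  funext fun i => congrArg b (map_add _ i k)

theorem rot_natCast_lift (e : ℕ) (b : ZMod d → ZMod 2) :
    rot n e (lift hd b) = lift hd (rot d e b) := by
  rw [rot_lift, map_natCast]

theorem lift_injective : Function.Injective (lift hd) :=
  (ZMod.castHom_surjective hd).injective_comp_right

theorem rot_lift_eq_self (b : ZMod d → ZMod 2) : rot n d (lift hd b) = lift hd b := by
  rw [rot_natCast_lift, ZMod.natCast_self, rot_zero]

variable [NeZero n]

theorem exists_lift_of_rot_eq_self {x : ZMod n → ZMod 2} (hx : rot n d x = x) :
    ∃ b, lift hd b = x := by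
  refine ⟨fun j => x j.val, funext fun i => ?_⟩
  -- `i = (i.val % d) + (i.val / d) * d` and `x` has period `d`.
  have hi : ((i.val % d : ℕ) : ZMod n) + ((d * (i.val / d) : ℕ) : ZMod n) = i := by
    rw [← Nat.cast_add, Nat.mod_add_div, ZMod.natCast_zmod_val]
  have hper := congrFun (rot_natCast_eq_self_of_dvd hx (dvd_mul_right d (i.val / d)))
    ((i.val % d : ℕ) : ZMod n)
  rw [rot, hi] at hper
  rw [hper, lift, Function.comp_apply, ZMod.castHom_apply, ZMod.cast_eq_val, ZMod.val_natCast]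

noncomputable def liftEquiv : (ZMod d → ZMod 2) ≃ {x : ZMod n → ZMod 2 // rot n d x = x} :=
  Equiv.ofBijective (fun b => ⟨lift hd b, rot_lift_eq_self hd b⟩)
    ⟨fun _ _ h => lift_injective hd (congrArg Subtype.val h),
     fun x => (exists_lift_of_rot_eq_self hd x.2).imp fun _ hb => Subtype.ext hb⟩

theorem card_subtype_eq_card_lift (P : (ZMod n → ZMod 2) → Prop)
    (hP : ∀ x, P x → rot n d x = x) :
    Nat.card {x // P x} = Nat.card {b // P (lift hd b)} :=
  Nat.card_congr <| (Equiv.subtypeSubtypeEquivSubtype (hP _)).symm.trans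
    ((liftEquiv hd).subtypeEquiv fun _ => Iff.rfl).symm

variable [NeZero d]

theorem card_fiber_castHom (j : ZMod d) : #{i : ZMod n | ZMod.castHom hd (ZMod d) i = j} = n / d := by
  have hsurj := ZMod.castHom_surjective hd
  have hfiber (j : ZMod d) := AddMonoidHom.card_fiber_eq_of_mem_range
    (ZMod.castHom hd (ZMod d)) (hsurj j) (hsurj 0)
  have hn : n = d * #{i : ZMod n | ZMod.castHom hd (ZMod d) i = 0} := by
    conv_lhs => rw [← ZMod.card n, ← Finset.card_univ,
      Finset.card_eq_sum_card_fiberwise (fun i _ => Finset.mem_univ (ZMod.castHom hd (ZMod d) i))]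
    rw [Finset.sum_congr rfl fun j _ => hfiber j, Finset.sum_const, Finset.card_univ, ZMod.card,
      smul_eq_mul]
  rw [hfiber]
  exact (Nat.div_eq_of_eq_mul_right (Nat.pos_of_ne_zero (NeZero.ne d)) hn).symm

theorem sum_castHom {M : Type*} [AddCommMonoid M] (f : ZMod d → M) :
    ∑ i : ZMod n, f (ZMod.castHom hd (ZMod d) i) = (n / d) • ∑ j, f j := by
  rw [← Finset.sum_fiberwise Finset.univ (ZMod.castHom hd (ZMod d)), Finset.smul_sum]
  refine Finset.sum_congr rfl fun j _ => ?_
  rw [Finset.sum_congr rfl fun i hi => by rw [(Finset.mem_filter.mp hi).2], Finset.sum_const,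
    card_fiber_castHom]

theorem parity_lift (b : ZMod d → ZMod 2) : parity (lift hd b) = (n / d) • parity b :=
  sum_castHom hd b

end Lift

theorem sum_range_lift [NeZero d] (hd : d ∣ n) (b : ZMod d → ZMod 2) :
    ∑ j ∈ range d, lift hd b j = parity b := by
  simp only [lift_natCast, sum_range_natCast (f := b), parity]

theorem parity_eq_nsmul_sum_range [NeZero n] (hd : d ∣ n) {x : ZMod n → ZMod 2}
    (hx : rot n d x = x) : parity x = (n / d) • ∑ j ∈ range d, x j := by
  have : NeZero d := neZero_of_dvd hd
  obtain ⟨b, rfl⟩ := exists_lift_of_rot_eq_self hd hx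
  rw [parity_lift, sum_range_lift]

theorem vanishing_iff (x : ZMod n → ZMod 2) :
    Vanishing n x ↔ ∃ d, d ∣ n ∧ Even (n / d) ∧ rot n d x = x ∧ ∑ j ∈ range d, x j = 1 := by
  refine exists_congr fun d => and_congr_right' <| and_congr_right' <| and_congr funext_iff.symm ?_
  rw [← ZMod.natCast_eq_one_iff_odd, natCast_card_filter_eq_one]

theorem not_vanishing_of_odd (hn : Odd n) (x : ZMod n → ZMod 2) : ¬ Vanishing n x :=
  fun ⟨_, hd, heven, _⟩ => Nat.not_even_iff_odd.mpr (hn.of_dvd_nat (Nat.div_dvd_of_dvd hd)) heven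

theorem bosonic_of_vanishing [NeZero n] {x : ZMod n → ZMod 2} (hx : Vanishing n x) :
    Bosonic n x := by
  obtain ⟨d, hd, heven, hper, hsum⟩ := (vanishing_iff x).mp hx
  rw [bosonic_iff, parity_eq_nsmul_sum_range hd hper, even_nsmul_zmod_two heven]

theorem not_fermionic_of_vanishing [NeZero n] {x : ZMod n → ZMod 2} (hx : Vanishing n x) :
    ¬ Fermionic n x := by
  rw [fermionic_iff, (bosonic_iff x).mp (bosonic_of_vanishing hx)]
  exact zero_ne_one

theorem vanishing_rot [NeZero n] (k : ZMod n) {x : ZMod n → ZMod 2} (hx : Vanishing n x) :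
    Vanishing n (rot n k x) := by
  obtain ⟨d, hd, heven, hper, hsum⟩ := (vanishing_iff x).mp hx
  have : NeZero d := neZero_of_dvd hd
  obtain ⟨b, rfl⟩ := exists_lift_of_rot_eq_self hd hper
  refine (vanishing_iff _).mpr ⟨d, hd, heven, by rw [rot_comm, hper], ?_⟩
  rw [rot_lift, sum_range_lift, parity_rot, ← sum_range_lift hd, hsum]

theorem vanishing_rot_iff [NeZero n] (k : ZMod n) (x : ZMod n → ZMod 2) :
    Vanishing n (rot n k x) ↔ Vanishing n x := by
  refine ⟨fun hx => ?_, vanishing_rot k⟩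
  simpa only [rot_rot, neg_add_cancel, rot_zero] using vanishing_rot (-k) hx

theorem rot_half_eq_self_of_vanishing {h : ℕ} {x : ZMod (2 * h) → ZMod 2}
    (hx : Vanishing (2 * h) x) : rot (2 * h) h x = x := by
  obtain ⟨d, hd, heven, hper, -⟩ := (vanishing_iff x).mp hx
  exact rot_natCast_eq_self_of_dvd hper (dvd_of_even_two_mul_div hd heven)

theorem vanishing_two_mul_lift_iff {h : ℕ} [NeZero h] (b : ZMod h → ZMod 2) :
    Vanishing (2 * h) (lift (Dvd.intro_left 2 rfl) b) ↔ Fermionic h b ∨ Vanishing h b := by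
  have hh : h ∣ 2 * h := Dvd.intro_left 2 rfl
  simp only [vanishing_iff, rot_natCast_lift, (lift_injective hh).eq_iff, lift_natCast]
  constructor
  · rintro ⟨d, hd, heven, hper, hsum⟩
    have hdh := dvd_of_even_two_mul_div hd heven
    rcases Nat.even_or_odd (h / d) with hhalf | hhalf
    · exact Or.inr ⟨d, hdh, hhalf, hper, hsum⟩
    · rw [fermionic_iff, parity_eq_nsmul_sum_range hdh hper, hsum, odd_nsmul_zmod_two hhalf]
      exact Or.inl rfl
  · rintro (hb | ⟨d, hdh, heven, hper, hsum⟩)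
    · refine ⟨h, hh, ?_, by rw [ZMod.natCast_self, rot_zero], ?_⟩
      · rw [Nat.mul_div_cancel _ (Nat.pos_of_ne_zero (NeZero.ne h))]
        exact even_two
      · rw [sum_range_natCast (f := b)]
        exact (fermionic_iff b).mp hb
    · refine ⟨d, hdh.trans hh, ?_, hper, hsum⟩
      rw [Nat.mul_div_assoc 2 hdh]
      exact even_two_mul _

theorem card_fermionic_periodic [NeZero n] (hd : d ∣ n) :
    Nat.card {x // Fermionic n x ∧ rot n d x = x} = if Odd (n / d) then 2 ^ (d - 1) else 0 := by
  have : NeZero d := neZero_of_dvd hd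
  rw [card_subtype_eq_card_lift hd _ fun x hx => hx.2]
  simp only [rot_lift_eq_self, and_true, fermionic_iff, parity_lift]
  split_ifs with hodd
  · simp only [odd_nsmul_zmod_two hodd]
    exact card_parity_eq 1
  · simp [even_nsmul_zmod_two (Nat.not_odd_iff_even.mp hodd)]

theorem card_bosonic_periodic [NeZero n] (hd : d ∣ n) :
    Nat.card {x // Bosonic n x ∧ rot n d x = x} = if Odd (n / d) then 2 ^ (d - 1) else 2 ^ d := by
  have : NeZero d := neZero_of_dvd hd
  rw [card_subtype_eq_card_lift hd _ fun x hx => hx.2]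
  simp only [rot_lift_eq_self, and_true, bosonic_iff, parity_lift]
  split_ifs with hodd
  · simp only [odd_nsmul_zmod_two hodd]
    exact card_parity_eq 0
  · simp [even_nsmul_zmod_two (Nat.not_odd_iff_even.mp hodd)]

theorem fixedPointSum_fermionic [NeZero n] :
    fixedPointSum n (Fermionic n) =
      ∑ m ∈ n.divisors, m.totient * if Odd m then 2 ^ (n / m - 1) else 0 := by
  rw [fixedPointSum_eq_sum_divisors]
  refine Finset.sum_congr rfl fun m hm => ?_
  have hmn := Nat.dvd_of_mem_divisors hm
  rw [card_fermionic_periodic (Nat.div_dvd_of_dvd hmn), Nat.div_div_self hmn (NeZero.ne n)]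

theorem fixedPointSum_bosonic [NeZero n] :
    fixedPointSum n (Bosonic n) =
      ∑ m ∈ n.divisors, m.totient * if Odd m then 2 ^ (n / m - 1) else 2 ^ (n / m) := by
  rw [fixedPointSum_eq_sum_divisors]
  refine Finset.sum_congr rfl fun m hm => ?_
  have hmn := Nat.dvd_of_mem_divisors hm
  rw [card_bosonic_periodic (Nat.div_dvd_of_dvd hmn), Nat.div_div_self hmn (NeZero.ne n)]

theorem two_mul_fixedPointSum_fermionic {n : ℕ} [NeZero n] :
    2 * fixedPointSum n (Fermionic n) = ∑ m ∈ n.divisors with Odd m, m.totient * 2 ^ (n / m) := by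
  rw [fixedPointSum_fermionic, Finset.mul_sum, Finset.sum_filter]
  refine Finset.sum_congr rfl fun m hm => ?_
  split_ifs
  · rw [mul_left_comm, mul_pow_sub_one (div_ne_zero_of_mem_divisors hm)]
  · rw [mul_zero, mul_zero]

theorem fixedPointSum_bosonic_two_mul {h : ℕ} [NeZero h] :
    fixedPointSum (2 * h) (Bosonic (2 * h)) =
      fixedPointSum (2 * h) (Fermionic (2 * h)) + 2 * fixedPointSum h (Bosonic h) := by
  have hsplit (m : ℕ) : m.totient * (if Odd m then 2 ^ (2 * h / m - 1) else 2 ^ (2 * h / m)) =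
      m.totient * (if Odd m then 2 ^ (2 * h / m - 1) else 0) +
        if Even m then m.totient * 2 ^ (2 * h / m) else 0 := by
    rcases Nat.even_or_odd m with hm | hm
    · simp [hm, Nat.not_odd_iff_even.mpr hm]
    · simp [hm, Nat.not_even_iff_odd.mpr hm]
  rw [fixedPointSum_bosonic, fixedPointSum_fermionic, fixedPointSum_bosonic,
    Finset.sum_congr rfl fun m _ => hsplit m, Finset.sum_add_distrib, ← Finset.sum_filter,
    sum_divisors_two_mul_filter_even (NeZero.ne h), Finset.mul_sum]
  congr 1
  refine Finset.sum_congr rfl fun j hj => ?_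
  rw [Nat.mul_div_mul_left _ _ two_pos, totient_two_mul]
  split_ifs
  · rw [mul_left_comm, mul_pow_sub_one (div_ne_zero_of_mem_divisors hj)]
  · ring

theorem fixedPointSum_vanishing_of_odd [NeZero n] (hn : Odd n) :
    fixedPointSum n (Vanishing n) = 0 :=
  Finset.sum_eq_zero fun _ _ => Nat.card_eq_zero.mpr <|
    Or.inl ⟨fun x => not_vanishing_of_odd hn x.1 x.2.1⟩

theorem fixedPointSum_vanishing_two_mul {h : ℕ} [NeZero h] :
    fixedPointSum (2 * h) (Vanishing (2 * h)) =
      2 * fixedPointSum h (fun b => Fermionic h b ∨ Vanishing h b) := by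
  have hh : h ∣ 2 * h := Dvd.intro_left 2 rfl
  have hfixed (k : ZMod (2 * h)) :
      Nat.card {x // Vanishing (2 * h) x ∧ rot (2 * h) k x = x} =
        Nat.card {b // (Fermionic h b ∨ Vanishing h b) ∧
          rot h (ZMod.castHom hh (ZMod h) k) b = b} := by
    rw [card_subtype_eq_card_lift hh _ fun x hx => rot_half_eq_self_of_vanishing hx.1]
    simp only [vanishing_two_mul_lift_iff, rot_lift, (lift_injective hh).eq_iff]
  rw [fixedPointSum, Finset.sum_congr rfl fun k _ => hfixed k,
    sum_castHom hh fun j => Nat.card {b // (Fermionic h b ∨ Vanishing h b) ∧ rot h j b = b},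
    Nat.mul_div_cancel _ (Nat.pos_of_ne_zero (NeZero.ne h)), smul_eq_mul, fixedPointSum]

theorem fixedPointSum_vanishing_add_fermionic (n : ℕ) [NeZero n] :
    fixedPointSum n (Vanishing n) + fixedPointSum n (Fermionic n) =
      fixedPointSum n (Bosonic n) := by
  obtain ⟨h, rfl | rfl⟩ := Nat.even_or_odd' n
  · have : NeZero h := ⟨by rintro rfl; exact NeZero.ne (2 * 0) rfl⟩
    -- Both sides equal `2 * fixedPointSum h (Bosonic h)`.
    have ih := fixedPointSum_vanishing_add_fermionic h
    rw [fixedPointSum_vanishing_two_mul,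
      fixedPointSum_or fun _ hF hV => not_fermionic_of_vanishing hV hF, add_comm _ (fixedPointSum h _),
      ih, fixedPointSum_bosonic_two_mul, add_comm]
  · rw [fixedPointSum_vanishing_of_odd (odd_two_mul_add_one h), zero_add, fixedPointSum_fermionic,
      fixedPointSum_bosonic]
    refine Finset.sum_congr rfl fun m hm => ?_
    rw [if_pos ((odd_two_mul_add_one h).of_dvd_nat (Nat.dvd_of_mem_divisors hm)),
      if_pos ((odd_two_mul_add_one h).of_dvd_nat (Nat.dvd_of_mem_divisors hm))]
termination_by n
decreasing_by have := NeZero.pos h; omega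

end BinaryWord

/-- For every positive integer `M`, the number of orbits of bosonic non-vanishing binary
words of length `M` equals the number of orbits of fermionic binary words of length `M`,
and both equal `(1/(2M)) · Σ_{n | M, n odd} φ(n) · 2^(M/n)`. -/
theorem bosonic_eq_fermionic_single_trace_states (M : ℕ) [NeZero M] :
    Nat.card {S : Set (ZMod M → ZMod 2) //
        ∃ x, (Bosonic M x ∧ ¬ Vanishing M x) ∧ S = rotOrbit M x}
      = Nat.card {S : Set (ZMod M → ZMod 2) // ∃ x, Fermionic M x ∧ S = rotOrbit M x}
    ∧ (Nat.card {S : Set (ZMod M → ZMod 2) // ∃ x, Fermionic M x ∧ S = rotOrbit M x} : ℚ)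
      = (1 / (2 * M)) *
        ∑ n ∈ M.divisors.filter (fun n => Odd n),
          (Nat.totient n : ℚ) * 2 ^ (M / n) := by
  have hF := BinaryWord.card_rotOrbits_mul_eq_fixedPointSum (Fermionic M)
    fun k x => (BinaryWord.fermionic_rot_iff k x).mpr
  have hB := BinaryWord.card_rotOrbits_mul_eq_fixedPointSum (fun x => Bosonic M x ∧ ¬ Vanishing M x)
    fun k x => by rw [BinaryWord.bosonic_rot_iff, BinaryWord.vanishing_rot_iff]; exact id
  have hsplit : BinaryWord.fixedPointSum M (Bosonic M) =
      BinaryWord.fixedPointSum M (fun x => Bosonic M x ∧ ¬ Vanishing M x) +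
        BinaryWord.fixedPointSum M (Vanishing M) := by
    rw [← BinaryWord.fixedPointSum_or fun _ h => h.2]
    exact BinaryWord.fixedPointSum_congr fun x => by
      have : Vanishing M x → Bosonic M x := BinaryWord.bosonic_of_vanishing
      tauto
  have hcount := BinaryWord.fixedPointSum_vanishing_add_fermionic M
  refine ⟨Nat.eq_of_mul_eq_mul_right (NeZero.pos M) (by omega), ?_⟩
  have hformula := BinaryWord.two_mul_fixedPointSum_fermionic (n := M)
  rw [← hF, ← mul_assoc, mul_comm 2] at hformula
  have hM : (M : ℚ) ≠ 0 := Nat.cast_ne_zero.mpr (NeZero.ne M)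
  field_simp
  exact_mod_cast hformula
end

section
/- Let M ≥ 2 be an integer, let k be an integer with 1 ≤ k ≤ M−1, let c be real and z₁, z₂ complex, and suppose the supersymmetry constraints Im(z₁) = Im(z₂) and c = Re(z₂) hold. Then 2·Im(z₂)·sin(2kπ/M) ± 2·√( (c − Re(z₂)·cos(2kπ/M))² + |z₁|²·sin²(2kπ/M) ) = 4·( Im(z₁)·cos(kπ/M) ± √( (Re(z₂))²·sin²(kπ/M) + |z₁|²·cos²(kπ/M) ) )·sin(kπ/M), for each choice of sign. -/
open Real

/- With `c = Re z₂` the first radicand is `(2 sin θ)²` times the second one, where `θ = kπ/M`,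
because `1 - cos 2θ = 2 sin² θ` and `sin 2θ = 2 sin θ cos θ`; since `0 ≤ θ ≤ π`, its square root
is `2 sin θ` times the second square root, and both sides of each identity agree. -/

theorem sin_natCast_mul_pi_div_nonneg {k M : ℕ} (hkM : k ≤ M) : 0 ≤ sin (k * π / M) := by
  apply sin_nonneg_of_nonneg_of_le_pi (by positivity)
  refine div_le_of_le_mul₀ (by positivity) pi_pos.le ?_
  rw [mul_comm]
  gcongr

theorem sqrt_sub_mul_cos_two_mul_sq_add (a r θ : ℝ) (hθ : 0 ≤ sin θ) :
    √((a - a * cos (2 * θ)) ^ 2 + r ^ 2 * sin (2 * θ) ^ 2)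
      = 2 * sin θ * √(a ^ 2 * sin θ ^ 2 + r ^ 2 * cos θ ^ 2) := by
  have hsq : (a - a * cos (2 * θ)) ^ 2 + r ^ 2 * sin (2 * θ) ^ 2
      = (2 * sin θ) ^ 2 * (a ^ 2 * sin θ ^ 2 + r ^ 2 * cos θ ^ 2) := by
    rw [sin_two_mul, cos_two_mul]
    linear_combination (-4 * a ^ 2 * (1 - cos θ ^ 2 + sin θ ^ 2)) * sin_sq_add_cos_sq θ
  rw [hsq, sqrt_mul (by positivity), sqrt_sq (by positivity)]

theorem susy_excitation_energy_general (M k : ℕ) (hk2 : k ≤ M - 1)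
    (c : ℝ) (z₁ z₂ : ℂ) (h1 : z₁.im = z₂.im) (h2 : c = z₂.re) :
    (2 * z₂.im * Real.sin (2 * k * Real.pi / M)
        + 2 * Real.sqrt ((c - z₂.re * Real.cos (2 * k * Real.pi / M)) ^ 2
            + ‖z₁‖ ^ 2 * Real.sin (2 * k * Real.pi / M) ^ 2)
      = 4 * (z₁.im * Real.cos (k * Real.pi / M)
            + Real.sqrt (z₂.re ^ 2 * Real.sin (k * Real.pi / M) ^ 2
                + ‖z₁‖ ^ 2 * Real.cos (k * Real.pi / M) ^ 2))
          * Real.sin (k * Real.pi / M))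
    ∧ (2 * z₂.im * Real.sin (2 * k * Real.pi / M)
        - 2 * Real.sqrt ((c - z₂.re * Real.cos (2 * k * Real.pi / M)) ^ 2
            + ‖z₁‖ ^ 2 * Real.sin (2 * k * Real.pi / M) ^ 2)
      = 4 * (z₁.im * Real.cos (k * Real.pi / M)
            - Real.sqrt (z₂.re ^ 2 * Real.sin (k * Real.pi / M) ^ 2
                + ‖z₁‖ ^ 2 * Real.cos (k * Real.pi / M) ^ 2))
          * Real.sin (k * Real.pi / M)) := by
  subst h2
  rw [h1]
  have hsin := sin_natCast_mul_pi_div_nonneg (show k ≤ M by omega)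
  set θ : ℝ := k * π / M
  have h2θ : 2 * (k : ℝ) * π / M = 2 * θ := by ring
  rw [h2θ, sqrt_sub_mul_cos_two_mul_sq_add _ _ _ hsin, sin_two_mul]
  constructor <;> ring

/-- Under the supersymmetry constraints `Im z₁ = Im z₂` and `c = Re z₂`, for
`1 ≤ k ≤ M−1` the excitation energy satisfies, for each choice of sign,
`2 Im(z₂) sin(2kπ/M) ± 2 √((c − Re z₂ cos(2kπ/M))² + |z₁|² sin²(2kπ/M))
  = 4 (Im(z₁) cos(kπ/M) ± √((Re z₂)² sin²(kπ/M) + |z₁|² cos²(kπ/M))) sin(kπ/M)`. -/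
theorem susy_excitation_energy (M k : ℕ) (hM : 2 ≤ M) (hk1 : 1 ≤ k) (hk2 : k ≤ M - 1)
    (c : ℝ) (z₁ z₂ : ℂ) (h1 : z₁.im = z₂.im) (h2 : c = z₂.re) :
    (2 * z₂.im * Real.sin (2 * k * Real.pi / M)
        + 2 * Real.sqrt ((c - z₂.re * Real.cos (2 * k * Real.pi / M)) ^ 2
            + ‖z₁‖ ^ 2 * Real.sin (2 * k * Real.pi / M) ^ 2)
      = 4 * (z₁.im * Real.cos (k * Real.pi / M)
            + Real.sqrt (z₂.re ^ 2 * Real.sin (k * Real.pi / M) ^ 2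
                + ‖z₁‖ ^ 2 * Real.cos (k * Real.pi / M) ^ 2))
          * Real.sin (k * Real.pi / M))
    ∧ (2 * z₂.im * Real.sin (2 * k * Real.pi / M)
        - 2 * Real.sqrt ((c - z₂.re * Real.cos (2 * k * Real.pi / M)) ^ 2
            + ‖z₁‖ ^ 2 * Real.sin (2 * k * Real.pi / M) ^ 2)
      = 4 * (z₁.im * Real.cos (k * Real.pi / M)
            - Real.sqrt (z₂.re ^ 2 * Real.sin (k * Real.pi / M) ^ 2
                + ‖z₁‖ ^ 2 * Real.cos (k * Real.pi / M) ^ 2))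
          * Real.sin (k * Real.pi / M)) :=
  susy_excitation_energy_general M k hk2 c z₁ z₂ h1 h2
end

section
/- Let G be an r×r complex Hermitian positive semidefinite matrix of rank p, and let ℋ be an r×r complex matrix with Gℋ = ℋ†G. Let S be a p×r complex matrix with S·G·S† = I_p (the p×p identity), and set 𝐇 = S·G·ℋ·S†. Then 𝐇 is a Hermitian p×p matrix, and every eigenvalue of 𝐇 is an eigenvalue of ℋ. -/
open Matrix
open scoped ComplexOrder

/-!
Since `G = Gᴴ` and `G ℋ = ℋᴴ G`, the matrix `S G ℋ Sᴴ` equals its own conjugate transpose.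

For the eigenvalues, the rank condition makes `G Sᴴ S` the identity on the column space of `G`:
the column space of `G Sᴴ` lies in that of `G`, and has dimension at least
`rank (S G Sᴴ) = p = rank G`. Hence `G ℋ Sᴴ = G Sᴴ 𝐇`, so an eigenvector `W` of `𝐇` for `E`
gives `G ℋ x = E G x` with `x = Sᴴ W` and `G x ≠ 0`. Then `ℋᴴ (G x) = E (G x)`; as `E` is real
(an eigenvalue of the Hermitian `𝐇`), `E` is an eigenvalue of `ℋ`, because
`det (ℋᴴ - E) = conj (det (ℋ - E))`.
-/

namespace Matrix

variable {n m : Type*} [Fintype n]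

theorem mul_mul_mul_eq_self_of_rank_le [Fintype m] {K : Type*} [Field K] [DecidableEq m]
    {G : Matrix n n K} {S : Matrix m n K} {T : Matrix n m K}
    (hS : S * G * T = 1) (hrank : G.rank ≤ Fintype.card m) :
    G * T * S * G = G := by
  have hle : LinearMap.range (G * T).mulVecLin ≤ LinearMap.range G.mulVecLin := by
    rw [mulVecLin_mul]
    exact LinearMap.range_comp_le_range _ _
  have hrange : LinearMap.range (G * T).mulVecLin = LinearMap.range G.mulVecLin := by
    refine Submodule.eq_of_le_of_finrank_le hle ?_
    calc G.rank ≤ Fintype.card m := hrank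
      _ = (S * (G * T)).rank := by rw [← Matrix.mul_assoc, hS, rank_one]
      _ ≤ (G * T).rank := rank_mul_le_right _ _
  refine ext_iff_mulVec.mpr fun v => ?_
  obtain ⟨u, hu⟩ : G *ᵥ v ∈ LinearMap.range (G * T).mulVecLin := hrange ▸ ⟨v, rfl⟩
  change (G * T) *ᵥ u = G *ᵥ v at hu
  calc (G * T * S * G) *ᵥ v = (G * T) *ᵥ ((S * G * T) *ᵥ u) := by
        rw [← mulVec_mulVec, ← hu, mulVec_mulVec, mulVec_mulVec]
        simp only [Matrix.mul_assoc]
    _ = G *ᵥ v := by rw [hS, one_mulVec, hu]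

theorem isHermitian_mul_mul_mul_conjTranspose {R : Type*} [CommSemiring R] [StarRing R]
    {G H : Matrix n n R} (hG : G.IsHermitian) (hGH : G * H = Hᴴ * G) (S : Matrix m n R) :
    (S * G * H * Sᴴ).IsHermitian := by
  simp only [IsHermitian, conjTranspose_mul, conjTranspose_conjTranspose, hG.eq,
    Matrix.mul_assoc, ← hGH]

theorem IsHermitian.star_eq_of_mulVec_eq_smul {𝕜 : Type*} [RCLike 𝕜] {A : Matrix n n 𝕜}
    (hA : A.IsHermitian) {E : 𝕜} {v : n → 𝕜} (hv : v ≠ 0) (hAv : A *ᵥ v = E • v) :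
    star E = E := by
  have hnorm : star v ⬝ᵥ v ≠ 0 := fun h => hv (dotProduct_star_self_eq_zero.mp h)
  have hquad : star v ⬝ᵥ (A *ᵥ v) = E * (star v ⬝ᵥ v) := by
    rw [hAv, dotProduct_smul, smul_eq_mul]
  have hself : star (star v ⬝ᵥ (A *ᵥ v)) = star v ⬝ᵥ (A *ᵥ v) := by
    rw [← star_dotProduct, star_mulVec, hA.eq, dotProduct_mulVec]
  rw [hquad, star_mul', ← star_dotProduct] at hself
  exact mul_right_cancel₀ hnorm hself

theorem exists_mulVec_eq_smul_of_conjTranspose_mulVec_eq_smul {K : Type*} [Field K]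
    [StarRing K] [DecidableEq n] {A : Matrix n n K} {E : K} {v : n → K} (hv : v ≠ 0)
    (hAv : Aᴴ *ᵥ v = star E • v) : ∃ w ≠ 0, A *ᵥ w = E • w := by
  have hker : (A - E • 1)ᴴ *ᵥ v = 0 := by
    rw [conjTranspose_sub, conjTranspose_smul, conjTranspose_one, sub_mulVec, smul_mulVec,
      one_mulVec, hAv, sub_self]
  have hdet : (A - E • 1).det = 0 := by
    rw [← star_eq_zero, ← det_conjTranspose]
    exact exists_mulVec_eq_zero_iff.mp ⟨v, hv, hker⟩
  obtain ⟨w, hw, hAw⟩ := exists_mulVec_eq_zero_iff.mpr hdet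
  refine ⟨w, hw, ?_⟩
  rwa [sub_mulVec, smul_mulVec, one_mulVec, sub_eq_zero] at hAw

end Matrix

/-- Let `G` be an `r×r` Hermitian positive semidefinite matrix of rank `p`, let `ℋ`
satisfy `Gℋ = ℋ†G`, and let `S` be a `p×r` matrix with `S G S† = I`.  Then
`𝐇 = S G ℋ S†` is Hermitian, and every eigenvalue of `𝐇` is an eigenvalue of `ℋ`. -/
theorem hamiltonian_matrix_hermitian_and_eigenvalues {r p : ℕ}
    (G H : Matrix (Fin r) (Fin r) ℂ)
    (hG : G.PosSemidef) (hrank : G.rank = p) (hGH : G * H = Hᴴ * G)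
    (S : Matrix (Fin p) (Fin r) ℂ) (hS : S * G * Sᴴ = 1)
    (Hbf : Matrix (Fin p) (Fin p) ℂ) (hHbf : Hbf = S * G * H * Sᴴ) :
    Hbf.IsHermitian
    ∧ ∀ E : ℂ, (∃ W : Fin p → ℂ, W ≠ 0 ∧ Hbf.mulVec W = E • W) →
        ∃ V : Fin r → ℂ, V ≠ 0 ∧ H.mulVec V = E • V := by
  have hHerm : Hbf.IsHermitian := hHbf ▸ isHermitian_mul_mul_mul_conjTranspose hG.1 hGH S
  refine ⟨hHerm, fun E ⟨W, hW0, hW⟩ => ?_⟩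
  have hGSSG : G * Sᴴ * S * G = G :=
    mul_mul_mul_eq_self_of_rank_le hS (by rw [hrank, Fintype.card_fin])
  have hGx : G *ᵥ (Sᴴ *ᵥ W) ≠ 0 := fun h => hW0 <| by
    rw [← one_mulVec W, ← hS, ← mulVec_mulVec, ← mulVec_mulVec, h, mulVec_zero]
  have hGHS : G * H * Sᴴ = G * Sᴴ * Hbf := calc
    G * H * Sᴴ = G * Sᴴ * S * G * H * Sᴴ := by rw [hGSSG]
    _ = G * Sᴴ * Hbf := by simp only [hHbf, Matrix.mul_assoc]
  have hHGx : Hᴴ *ᵥ (G *ᵥ (Sᴴ *ᵥ W)) = star E • G *ᵥ (Sᴴ *ᵥ W) := by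
    rw [hHerm.star_eq_of_mulVec_eq_smul hW0 hW, mulVec_mulVec, mulVec_mulVec, ← hGH,
      mulVec_mulVec, hGHS, ← mulVec_mulVec, hW, mulVec_smul]
  exact exists_mulVec_eq_smul_of_conjTranspose_mulVec_eq_smul hGx hHGx
end
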